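/- The map M ↦ z^{dev(M)}·M is a bijection from the set of standard R-submodules of O onto the set of R-submodules M' ⊆ O with dim_k(O/M') = δ (equivalently, of deviation 0). If moreover Γ is symmetric (c = 2δ), then every R-submodule M' ⊆ O with dim_k(O/M') = δ contains z^{2δ}·O. -/

import Mathlib

open PowerSeries

/-- `ν f = n` : the order of the power series `f` equals `n`. -/
def HasOrd {k : Type*} [Semiring k] (f : PowerSeries k) (n : ℕ) : Prop :=
  PowerSeries.coeff n f ≠ 0 ∧ ∀ m < n, PowerSeries.coeff m f = 0

/-- The set of orders of the nonzero elements of `S ⊆ k[[z]]`. -/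
def ValSet {k : Type*} [Semiring k] (S : Set (PowerSeries k)) : Set ℕ :=
  {n | ∃ f ∈ S, HasOrd f n}

/-!
Write `Δ_M` for the value set of `M`. An `R`-submodule containing an element of order `d` contains
`z^(m+d)·O`, and once a subspace `M` contains some `z^N·O`, the monomials `z^n` with `n ∉ Δ_M`
span a complement of `M`, so that `deg M = |ℕ \ Δ_M|`. Since `Δ_{z^d M} = d + Δ_M`, multiplication
by `z^d` raises the degree by exactly `d`. A standard module has `0 ∈ Δ_M`, so `d` is recovered as
`min Δ_{z^d M}`; conversely every nonzero `M'` is `z^d M` with `d = min Δ_{M'}` and `M = z^{-d} M'`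
standard.

For the last claim: if `n ∉ Δ_{M'}`, then `n - x ∉ Δ_{M'}` for every `x ∈ Γ` with `x ≤ n`, so
`n + 1 ≤ δ + |ℕ \ Δ_{M'}| = 2δ`. Hence `Δ_{M'}` contains every `n ≥ 2δ`, which forces
`z^{2δ}·O ⊆ M'`.
-/

theorem ncard_compl_image_add {Δ : Set ℕ} (hΔ : Δᶜ.Finite) (d : ℕ) :
    ((· + d) '' Δ)ᶜ.ncard = d + Δᶜ.ncard := by
  have hsplit : ((· + d) '' Δ)ᶜ = Set.Iio d ∪ (· + d) '' Δᶜ := by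
    ext n
    rcases lt_or_ge n d with h | h
    · simp only [Set.mem_compl_iff, Set.mem_image, Set.mem_union, Set.mem_Iio, h, true_or,
        iff_true]
      rintro ⟨a, -, rfl⟩
      omega
    · obtain ⟨a, rfl⟩ := Nat.exists_eq_add_of_le' h
      simp
  have hdisj : Disjoint (Set.Iio d) ((· + d) '' Δᶜ) :=
    Set.disjoint_left.2 fun n hn ⟨a, _, ha⟩ => by simp only [Set.mem_Iio] at hn ha; omega
  rw [hsplit, Set.ncard_union_eq hdisj (Set.finite_Iio d) (hΔ.image _),
    Set.ncard_image_of_injective _ (add_left_injective d), Set.ncard_Iio_nat]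

theorem lt_ncard_compl_add_ncard_compl {Γ Δ : Set ℕ} (hΓ : Γᶜ.Finite) (hΔ : Δᶜ.Finite)
    (hadd : ∀ x ∈ Γ, ∀ y ∈ Δ, x + y ∈ Δ) {n : ℕ} (hn : n ∉ Δ) :
    n < Γᶜ.ncard + Δᶜ.ncard := by
  -- `x ↦ n - x` sends the elements of `Γ` below `n` to gaps of `Δ`
  have hΓn : (Set.Iic n ∩ Γ).ncard ≤ Δᶜ.ncard :=
    Set.ncard_le_ncard_of_injOn (n - ·)
      (fun x ⟨hxn, hx⟩ hy => hn (by simpa [Nat.add_sub_cancel' hxn] using hadd x hx _ hy))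
      (fun x hx y hy h => by simp only [Set.mem_inter_iff, Set.mem_Iic] at hx hy h; omega) hΔ
  have hgaps : (Set.Iic n \ Γ).ncard ≤ Γᶜ.ncard := Set.ncard_le_ncard (fun x hx => hx.2) hΓ
  have hsplit := Set.ncard_inter_add_ncard_sdiff_eq_ncard (Set.Iic n) Γ (Set.finite_Iic n)
  rw [Set.ncard_Iic_nat] at hsplit
  omega

section

variable {k : Type*}

theorem mem_valSet_iff [Semiring k] {S : Set k⟦X⟧} {n : ℕ} :
    n ∈ ValSet S ↔ ∃ f ∈ S, f.order = n := by
  simp only [ValSet, HasOrd, Set.mem_ofPred_eq, order_eq_nat]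

variable [Field k]

theorem order_toNat_mem_valSet {S : Set k⟦X⟧} {f : k⟦X⟧} (hf : f ∈ S) (h0 : f ≠ 0) :
    f.order.toNat ∈ ValSet S :=
  mem_valSet_iff.2 ⟨f, hf, (ENat.natCast_toNat (order_eq_top.not.2 h0)).symm⟩

theorem Ici_subset_valSet {S : Set k⟦X⟧} {N : ℕ} (hN : ∀ f, X ^ N * f ∈ S) :
    Set.Ici N ⊆ ValSet S := fun n hn =>
  mem_valSet_iff.2 ⟨_, hN (X ^ (n - N)), by rw [← pow_add, order_X_pow, Nat.add_sub_cancel' hn]⟩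

theorem finite_valSet_compl {S : Set k⟦X⟧} {N : ℕ} (hN : ∀ f, X ^ N * f ∈ S) :
    (ValSet S)ᶜ.Finite :=
  (Set.finite_Iio N).subset fun _ hn =>
    Set.mem_Iio.2 (not_le.1 fun h => hn (Ici_subset_valSet hN h))

theorem PowerSeries.linearIndependent_X_pow :
    LinearIndependent k (fun n : ℕ => (X : k⟦X⟧) ^ n) := by
  rw [linearIndependent_iff']
  intro s g hg i hi
  simpa [coeff_X_pow, hi] using congrArg (coeff i) hg

theorem coeff_eq_zero_of_mem_span_X_pow {s : Set ℕ} {p : k⟦X⟧}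
    (hp : p ∈ Submodule.span k ((X ^ ·) '' s)) {j : ℕ} (hj : j ∉ s) : coeff j p = 0 := by
  induction hp using Submodule.span_induction with
  | mem x hx =>
    obtain ⟨n, hn, rfl⟩ := hx
    rw [coeff_X_pow, if_neg (ne_of_mem_of_not_mem hn hj).symm]
  | zero => simp
  | add x y _ _ hx hy => simp [hx, hy]
  | smul a x _ hx => simp [hx]

variable {M : Submodule k k⟦X⟧} {N : ℕ}

theorem X_pow_mul_mem_sup_span_X_pow (hN : ∀ f, X ^ N * f ∈ M) (j : ℕ) (f : k⟦X⟧) :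
    X ^ j * f ∈ M ⊔ Submodule.span k ((X ^ ·) '' {n | j ≤ n ∧ n ∉ ValSet (M : Set k⟦X⟧)}) := by
  obtain ⟨t, ht⟩ : ∃ t, N ≤ j + t := ⟨N, by omega⟩
  induction t generalizing j f with
  | zero =>
    obtain ⟨e, rfl⟩ := Nat.exists_eq_add_of_le ht
    rw [pow_add, mul_assoc]
    exact Submodule.mem_sup_left (hN _)
  | succ t ih =>
    set P := M ⊔ Submodule.span k ((X ^ ·) '' {n | j ≤ n ∧ n ∉ ValSet (M : Set k⟦X⟧)})
    have hmono : M ⊔ Submodule.span k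
        ((X ^ ·) '' {n | j + 1 ≤ n ∧ n ∉ ValSet (M : Set k⟦X⟧)}) ≤ P :=
      sup_le_sup_left (Submodule.span_mono
        (Set.image_mono (Set.ofPred_subset_ofPred.2 fun n hn => ⟨by omega, hn.2⟩))) _
    -- `X ^ j * u` is the leading term to cancel: a gap monomial, or an element of `M` of order `j`
    obtain ⟨u, hu0, hu⟩ : ∃ u : k⟦X⟧, constantCoeff u ≠ 0 ∧ X ^ j * u ∈ P := by
      by_cases hj : j ∈ ValSet (M : Set k⟦X⟧)
      · obtain ⟨g, hg, hgj⟩ := mem_valSet_iff.1 hj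
        have hg0 : g ≠ 0 := by rintro rfl; simp at hgj
        refine ⟨divXPowOrder g, constantCoeff_divXPowOrder_eq_zero_iff.not.2 hg0, ?_⟩
        rw [← X_pow_order_mul_divXPowOrder (f := g), hgj, ENat.toNat_natCast] at hg
        exact Submodule.mem_sup_left hg
      · exact ⟨1, by simp, Submodule.mem_sup_right
          (Submodule.subset_span ⟨j, ⟨le_rfl, hj⟩, (mul_one _).symm⟩)⟩
    set c := constantCoeff f / constantCoeff u
    obtain ⟨h, hh⟩ : X ∣ f - c • u := X_dvd_iff.2 (by simp [c, hu0])
    have hsplit : X ^ j * f = c • (X ^ j * u) + X ^ (j + 1) * h := by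
      rw [pow_succ, mul_assoc, ← hh, smul_eq_C_mul, smul_eq_C_mul]; ring
    rw [hsplit]
    exact P.add_mem (P.smul_mem c hu) (hmono (ih (j + 1) h (by omega)))

theorem X_pow_mul_mem_of_Ici_subset_valSet {a : ℕ} (hN : ∀ f, X ^ N * f ∈ M)
    (ha : Set.Ici a ⊆ ValSet (M : Set k⟦X⟧)) (f : k⟦X⟧) :
    X ^ a * f ∈ M := by
  have hgaps : {n | a ≤ n ∧ n ∉ ValSet (M : Set k⟦X⟧)} = ∅ :=
    Set.eq_empty_of_forall_notMem fun n hn => hn.2 (ha hn.1)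
  simpa [hgaps] using X_pow_mul_mem_sup_span_X_pow hN a f

theorem isCompl_span_X_pow_valSet_compl (hN : ∀ f, X ^ N * f ∈ M) :
    IsCompl M (Submodule.span k ((X ^ ·) '' (ValSet (M : Set k⟦X⟧))ᶜ)) := by
  constructor
  · rw [Submodule.disjoint_def]
    intro p hpM hpS
    by_contra hp
    exact coeff_order hp
      (coeff_eq_zero_of_mem_span_X_pow hpS (not_not.2 (order_toNat_mem_valSet hpM hp)))
  · rw [codisjoint_iff, eq_top_iff]
    intro f _
    have hf := X_pow_mul_mem_sup_span_X_pow hN 0 f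
    simp only [zero_le, true_and, pow_zero, one_mul] at hf
    exact hf

theorem finite_quotient_of_X_pow_mul_mem (hN : ∀ f, X ^ N * f ∈ M) :
    Module.Finite k (k⟦X⟧ ⧸ M) := by
  have := FiniteDimensional.span_of_finite k
    ((finite_valSet_compl hN).image ((X : k⟦X⟧) ^ ·))
  exact Module.Finite.equiv
    (Submodule.quotientEquivOfIsCompl _ _ (isCompl_span_X_pow_valSet_compl hN)).symm

theorem finrank_quotient_eq_ncard_valSet_compl (hN : ∀ f, X ^ N * f ∈ M) :
    Module.finrank k (k⟦X⟧ ⧸ M) = (ValSet (M : Set k⟦X⟧))ᶜ.ncard := by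
  have := (finite_valSet_compl hN).fintype
  have hli : LinearIndependent k fun n : ↥(ValSet (M : Set k⟦X⟧))ᶜ => (X : k⟦X⟧) ^ (n : ℕ) :=
    linearIndependent_X_pow.comp _ Subtype.val_injective
  rw [(Submodule.quotientEquivOfIsCompl _ _ (isCompl_span_X_pow_valSet_compl hN)).finrank_eq,
    Set.image_eq_range, finrank_span_eq_card hli,
    ← Nat.card_eq_fintype_card, Nat.card_coe_set_eq]

theorem finrank_quotient_le_of_valSet_subset (hN : ∀ f, X ^ N * f ∈ M)
    {S : Set k⟦X⟧} (hS : (ValSet S)ᶜ.Finite) (h : ValSet S ⊆ ValSet (M : Set k⟦X⟧)) :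
    Module.finrank k (k⟦X⟧ ⧸ M) ≤ (ValSet S)ᶜ.ncard := by
  rw [finrank_quotient_eq_ncard_valSet_compl hN]
  exact Set.ncard_le_ncard (Set.compl_subset_compl.2 h) hS

theorem ne_bot_of_finite_quotient [Module.Finite k (k⟦X⟧ ⧸ M)] : M ≠ ⊥ := by
  rintro rfl
  have := Module.Finite.equiv (Submodule.quotEquivOfEqBot (⊥ : Submodule k k⟦X⟧) rfl)
  exact Module.Finite.not_linearIndependent_of_infinite _ (linearIndependent_X_pow (k := k))

theorem valSet_map_mulLeft_X_pow (M : Submodule k k⟦X⟧) (d : ℕ) :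
    ValSet (M.map (LinearMap.mulLeft k (X ^ d)) : Set k⟦X⟧) =
      (· + d) '' ValSet (M : Set k⟦X⟧) := by
  ext n
  simp only [mem_valSet_iff, Set.mem_image, SetLike.mem_coe, Submodule.mem_map,
    LinearMap.mulLeft_apply]
  constructor
  · rintro ⟨_, ⟨f, hf, rfl⟩, hfn⟩
    rw [order_mul, order_X_pow] at hfn
    obtain ⟨a, ha⟩ := (ENat.ne_top_iff_exists (n := f.order)).1 fun h => by simp [h] at hfn
    rw [← ha] at hfn
    exact ⟨a, ⟨f, hf, ha.symm⟩, by rw [add_comm]; exact_mod_cast hfn⟩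
  · rintro ⟨a, ⟨f, hf, hfa⟩, rfl⟩
    exact ⟨X ^ d * f, ⟨f, hf, rfl⟩, by rw [order_mul, order_X_pow, hfa, add_comm]; norm_cast⟩

theorem X_pow_add_mul_mem_map_mulLeft (hN : ∀ f, X ^ N * f ∈ M) (d : ℕ)
    (f : k⟦X⟧) : X ^ (d + N) * f ∈ M.map (LinearMap.mulLeft k (X ^ d)) :=
  ⟨X ^ N * f, hN f, by rw [LinearMap.mulLeft_apply, pow_add, mul_assoc]⟩

theorem finrank_quotient_map_mulLeft_X_pow (hN : ∀ f, X ^ N * f ∈ M) (d : ℕ) :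
    Module.finrank k (k⟦X⟧ ⧸ M.map (LinearMap.mulLeft k (X ^ d))) =
      d + Module.finrank k (k⟦X⟧ ⧸ M) := by
  rw [finrank_quotient_eq_ncard_valSet_compl (X_pow_add_mul_mem_map_mulLeft hN d),
    valSet_map_mulLeft_X_pow, ncard_compl_image_add (finite_valSet_compl hN),
    finrank_quotient_eq_ncard_valSet_compl hN]

theorem sInf_valSet_map_mulLeft_X_pow (h0 : 0 ∈ ValSet (M : Set k⟦X⟧)) (d : ℕ) :
    sInf (ValSet (M.map (LinearMap.mulLeft k (X ^ d)) : Set k⟦X⟧)) = d := by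
  rw [valSet_map_mulLeft_X_pow]
  refine le_antisymm (Nat.sInf_le ⟨0, h0, zero_add d⟩) (le_csInf ⟨d, 0, h0, zero_add d⟩ ?_)
  rintro _ ⟨a, _, rfl⟩
  exact Nat.le_add_left d a

theorem map_mulLeft_X_pow_injective (d : ℕ) :
    Function.Injective (Submodule.map (LinearMap.mulLeft k ((X : k⟦X⟧) ^ d))) :=
  Submodule.map_injective_of_injective (mul_right_injective₀ (pow_ne_zero d X_ne_zero))

def IsRSubmodule (R : Subalgebra k k⟦X⟧) (M : Submodule k k⟦X⟧) : Prop :=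
  ∀ r ∈ R, ∀ f ∈ M, r * f ∈ M

variable {R : Subalgebra k k⟦X⟧} {m : ℕ}

theorem IsRSubmodule.map_mulLeft (hM : IsRSubmodule R M) (g : k⟦X⟧) :
    IsRSubmodule R (M.map (LinearMap.mulLeft k g)) := by
  rintro r hr _ ⟨f, hf, rfl⟩
  exact ⟨r * f, hM r hr f hf, by simp only [LinearMap.mulLeft_apply]; ring⟩

theorem IsRSubmodule.comap_mulLeft (hM : IsRSubmodule R M) (g : k⟦X⟧) :
    IsRSubmodule R (M.comap (LinearMap.mulLeft k g)) := by
  intro r hr f hf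
  simpa only [Submodule.mem_comap, LinearMap.mulLeft_apply, mul_left_comm g r f] using
    hM r hr _ hf

theorem IsRSubmodule.add_mem_valSet (hM : IsRSubmodule R M) {s n : ℕ}
    (hs : s ∈ ValSet (R : Set k⟦X⟧)) (hn : n ∈ ValSet (M : Set k⟦X⟧)) :
    s + n ∈ ValSet (M : Set k⟦X⟧) := by
  obtain ⟨r, hr, hrs⟩ := mem_valSet_iff.1 hs
  obtain ⟨f, hf, hfn⟩ := mem_valSet_iff.1 hn
  exact mem_valSet_iff.2 ⟨r * f, hM r hr f hf, by rw [order_mul, hrs, hfn]; norm_cast⟩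

theorem IsRSubmodule.X_pow_add_mul_mem (hRm : ∀ f, X ^ m * f ∈ R) (hM : IsRSubmodule R M)
    {d : ℕ} (hd : d ∈ ValSet (M : Set k⟦X⟧)) (f : k⟦X⟧) : X ^ (m + d) * f ∈ M := by
  obtain ⟨g, hg, hgd⟩ := mem_valSet_iff.1 hd
  have hg0 : g ≠ 0 := by rintro rfl; simp at hgd
  obtain ⟨v, hv⟩ := (isUnit_divided_by_X_pow_order hg0).exists_right_inv
  have hfactor : X ^ (m + d) * f = X ^ m * (f * v) * g := by
    conv_rhs => rw [← X_pow_order_mul_divXPowOrder (f := g), hgd, ENat.toNat_natCast]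
    linear_combination (-(X ^ (m + d) * f)) * hv
  rw [hfactor]
  exact hM _ (hRm _) g hg

theorem zero_mem_valSet_subalgebra : 0 ∈ ValSet (R : Set k⟦X⟧) :=
  mem_valSet_iff.2 ⟨1, R.one_mem, order_one⟩

theorem IsRSubmodule.X_pow_mul_mem_of_valSet_subset (hRm : ∀ f, X ^ m * f ∈ R)
    (hM : IsRSubmodule R M) (hΓ : ValSet (R : Set k⟦X⟧) ⊆ ValSet (M : Set k⟦X⟧))
    (f : k⟦X⟧) : X ^ m * f ∈ M :=
  hM.X_pow_add_mul_mem hRm (hΓ zero_mem_valSet_subalgebra) f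

theorem IsRSubmodule.exists_valSet_subset_map_eq (hM : IsRSubmodule R M) (h0 : M ≠ ⊥) :
    ∃ (M₀ : Submodule k k⟦X⟧) (d : ℕ), IsRSubmodule R M₀ ∧
      ValSet (R : Set k⟦X⟧) ⊆ ValSet (M₀ : Set k⟦X⟧) ∧
      M₀.map (LinearMap.mulLeft k (X ^ d)) = M := by
  obtain ⟨f, hf, hf0⟩ := M.ne_bot_iff.1 h0
  set d := sInf (ValSet (M : Set k⟦X⟧))
  obtain ⟨g, hg, hgd⟩ : ∃ g ∈ M, g.order = d :=
    mem_valSet_iff.1 (Nat.sInf_mem ⟨_, order_toNat_mem_valSet hf hf0⟩)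
  have hg0 : g ≠ 0 := by rintro rfl; simp at hgd
  have hdvd : ∀ f ∈ M, X ^ d ∣ f := by
    intro f hf
    rcases eq_or_ne f 0 with rfl | hf0
    · exact dvd_zero _
    · exact (pow_dvd_pow X (Nat.sInf_le (order_toNat_mem_valSet hf hf0))).trans X_pow_order_dvd
  set M₀ := M.comap (LinearMap.mulLeft k (X ^ d))
  have hu : divXPowOrder g ∈ M₀ := by
    rw [Submodule.mem_comap, LinearMap.mulLeft_apply,
      show d = g.order.toNat by rw [hgd, ENat.toNat_natCast], X_pow_order_mul_divXPowOrder]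
    exact hg
  have hu0 : (divXPowOrder g).order = (0 : ℕ) :=
    order_zero_of_unit (isUnit_divided_by_X_pow_order hg0)
  refine ⟨M₀, d, hM.comap_mulLeft _, fun s hs => ?_, Submodule.map_comap_eq_self ?_⟩
  · have hs0 := (hM.comap_mulLeft (X ^ d)).add_mem_valSet hs (mem_valSet_iff.2 ⟨_, hu, hu0⟩)
    rwa [add_zero] at hs0
  · intro f hf
    obtain ⟨h, rfl⟩ := hdvd f hf
    exact ⟨h, rfl⟩

theorem IsRSubmodule.X_pow_mul_mem_of_finrank_eq (hRm : ∀ f, X ^ m * f ∈ R)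
    (hM : IsRSubmodule R M) [Module.Finite k (k⟦X⟧ ⧸ M)]
    (hrk : Module.finrank k (k⟦X⟧ ⧸ M) = (ValSet (R : Set k⟦X⟧))ᶜ.ncard) (f : k⟦X⟧) :
    X ^ (2 * (ValSet (R : Set k⟦X⟧))ᶜ.ncard) * f ∈ M := by
  obtain ⟨g, hg, hg0⟩ := M.ne_bot_iff.1 ne_bot_of_finite_quotient
  have hN := hM.X_pow_add_mul_mem hRm (order_toNat_mem_valSet hg hg0)
  refine X_pow_mul_mem_of_Ici_subset_valSet hN (fun n hn => ?_) f
  by_contra hgap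
  have hlt := lt_ncard_compl_add_ncard_compl (finite_valSet_compl hRm) (finite_valSet_compl hN)
    (fun x hx y hy => hM.add_mem_valSet hx hy) hgap
  rw [← finrank_quotient_eq_ncard_valSet_compl hN, hrk] at hlt
  rw [Set.mem_Ici] at hn
  omega

end

theorem dev_shift_bijection_general
    {k : Type*} [Field k]
    (R : Subalgebra k (PowerSeries k)) (m : ℕ)
    (hRm : ∀ f : PowerSeries k, PowerSeries.X ^ m * f ∈ R) :
    Set.BijOn
      (fun M : Submodule k (PowerSeries k) =>
        Submodule.map
          (LinearMap.mulLeft k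
            (PowerSeries.X ^ (((ValSet (R : Set (PowerSeries k)))ᶜ).ncard
              - Module.finrank k (PowerSeries k ⧸ M)))) M)
      {M : Submodule k (PowerSeries k) |
        (∀ r ∈ R, ∀ f ∈ M, r * f ∈ M) ∧
        ValSet (R : Set (PowerSeries k)) ⊆ ValSet (M : Set (PowerSeries k))}
      {M' : Submodule k (PowerSeries k) |
        (∀ r ∈ R, ∀ f ∈ M', r * f ∈ M') ∧
        Module.Finite k (PowerSeries k ⧸ M') ∧
        Module.finrank k (PowerSeries k ⧸ M')
          = ((ValSet (R : Set (PowerSeries k)))ᶜ).ncard} ∧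
    (sInf {c : ℕ | ∀ n, c ≤ n → n ∈ ValSet (R : Set (PowerSeries k))}
        = 2 * ((ValSet (R : Set (PowerSeries k)))ᶜ).ncard →
      ∀ M' : Submodule k (PowerSeries k),
        (∀ r ∈ R, ∀ f ∈ M', r * f ∈ M') →
        Module.Finite k (PowerSeries k ⧸ M') →
        Module.finrank k (PowerSeries k ⧸ M')
          = ((ValSet (R : Set (PowerSeries k)))ᶜ).ncard →
        ∀ f : PowerSeries k,
          PowerSeries.X ^ (2 * ((ValSet (R : Set (PowerSeries k)))ᶜ).ncard) * f ∈ M') := by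
  set δ := ((ValSet (R : Set k⟦X⟧))ᶜ).ncard
  refine ⟨⟨?_, ?_, ?_⟩, fun _ M' (hM' : IsRSubmodule R M') _ hrk =>
    hM'.X_pow_mul_mem_of_finrank_eq hRm hrk⟩
  · rintro M ⟨hM : IsRSubmodule R M, hΓM⟩
    have hMm := hM.X_pow_mul_mem_of_valSet_subset hRm hΓM
    have hle := finrank_quotient_le_of_valSet_subset hMm (finite_valSet_compl hRm) hΓM
    refine ⟨hM.map_mulLeft _,
      finite_quotient_of_X_pow_mul_mem (X_pow_add_mul_mem_map_mulLeft hMm _), ?_⟩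
    rw [finrank_quotient_map_mulLeft_X_pow hMm]
    omega
  · rintro M₁ ⟨-, hΓM₁⟩ M₂ ⟨-, hΓM₂⟩ h
    have hd := congrArg (fun M : Submodule k k⟦X⟧ => sInf (ValSet (M : Set k⟦X⟧))) h
    simp only [sInf_valSet_map_mulLeft_X_pow (hΓM₁ zero_mem_valSet_subalgebra),
      sInf_valSet_map_mulLeft_X_pow (hΓM₂ zero_mem_valSet_subalgebra)] at hd
    simp only [hd] at h
    exact map_mulLeft_X_pow_injective _ h
  · rintro M' ⟨hM' : IsRSubmodule R M', hfin, hrk⟩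
    obtain ⟨M, d, hM, hΓM, rfl⟩ := hM'.exists_valSet_subset_map_eq ne_bot_of_finite_quotient
    refine ⟨M, ⟨hM, hΓM⟩, ?_⟩
    rw [finrank_quotient_map_mulLeft_X_pow (hM.X_pow_mul_mem_of_valSet_subset hRm hΓM)] at hrk
    simp only [← hrk, Nat.add_sub_cancel]

/-- Let `R ⊆ O = k[[z]]` be a `k`-subalgebra containing `z^m·O`, with value
semigroup `Γ`, genus `δ` and conductor `c`.  The map `M ↦ z^{dev(M)}·M` is a bijection from
the set of standard `R`-submodules of `O` onto the set of `R`-submodules `M'` with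
`dim_k(O/M') = δ` (deviation `0`).  Moreover, if `Γ` is symmetric (`c = 2δ`), then every
such `M'` contains `z^{2δ}·O`. -/
theorem dev_shift_bijection
    {k : Type*} [Field k]
    (R : Subalgebra k (PowerSeries k)) (m : ℕ) (hm : 1 ≤ m)
    (hRm : ∀ f : PowerSeries k, PowerSeries.X ^ m * f ∈ R) :
    Set.BijOn
      (fun M : Submodule k (PowerSeries k) =>
        Submodule.map
          (LinearMap.mulLeft k
            (PowerSeries.X ^ (((ValSet (R : Set (PowerSeries k)))ᶜ).ncard
              - Module.finrank k (PowerSeries k ⧸ M)))) M)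
      {M : Submodule k (PowerSeries k) |
        (∀ r ∈ R, ∀ f ∈ M, r * f ∈ M) ∧
        ValSet (R : Set (PowerSeries k)) ⊆ ValSet (M : Set (PowerSeries k))}
      {M' : Submodule k (PowerSeries k) |
        (∀ r ∈ R, ∀ f ∈ M', r * f ∈ M') ∧
        Module.Finite k (PowerSeries k ⧸ M') ∧
        Module.finrank k (PowerSeries k ⧸ M')
          = ((ValSet (R : Set (PowerSeries k)))ᶜ).ncard} ∧
    (sInf {c : ℕ | ∀ n, c ≤ n → n ∈ ValSet (R : Set (PowerSeries k))}
        = 2 * ((ValSet (R : Set (PowerSeries k)))ᶜ).ncard →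
      ∀ M' : Submodule k (PowerSeries k),
        (∀ r ∈ R, ∀ f ∈ M', r * f ∈ M') →
        Module.Finite k (PowerSeries k ⧸ M') →
        Module.finrank k (PowerSeries k ⧸ M')
          = ((ValSet (R : Set (PowerSeries k)))ᶜ).ncard →
        ∀ f : PowerSeries k,
          PowerSeries.X ^ (2 * ((ValSet (R : Set (PowerSeries k)))ᶜ).ncard) * f ∈ M') :=
  dev_shift_bijection_general R m hRm
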